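/- arXiv:2204.04675 — 5 statements merged into one kernel-verified Lean document; each statement's English description precedes it below -/
import Mathlib

section
/- Let A be a complex unital Banach algebra, let a ∈ A be non-invertible, and let σ be a spectral set of a containing 0 with spectral idempotent p = p_σ. Set r = sup{|λ| : λ ∈ σ}. Then for every ξ ∈ ℂ with |ξ| > 2r and every μ ∈ σ, the element a − μ − ξp is invertible in A. -/
/-- If `a` is non-invertible, `σ` is a spectral set of `a` containing `0` with spectral
idempotent `p` (characterized by: `p` is an idempotent commuting with `a`, the corner
spectrum of `ap` in `pAp` equals `σ`, and the corner spectrum of `a(1-p)` in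
`(1-p)A(1-p)` equals `σ(a) \ σ`), and `r = sup {‖λ‖ : λ ∈ σ}`, then for every `ξ` with
`‖ξ‖ > 2r` and every `μ ∈ σ`, the element `a - μ·1 - ξ·p` is invertible. -/
theorem stmt7 {A : Type*} [NormedRing A] [NormedAlgebra ℂ A] [CompleteSpace A]
    (a p : A) (σ : Set ℂ) (hna : ¬ IsUnit a) (hσ : σ ⊆ spectrum ℂ a)
    (h0 : (0 : ℂ) ∈ σ) (hp : p * p = p) (hcomm : a * p = p * a)
    (hspec1 : {lam : ℂ | ¬ ∃ b : A, p * b * p = b ∧ b * (lam • p - a * p) = p ∧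
      (lam • p - a * p) * b = p} = σ)
    (hspec2 : {lam : ℂ | ¬ ∃ b : A, (1 - p) * b * (1 - p) = b ∧
      b * (lam • (1 - p) - a * (1 - p)) = 1 - p ∧
      (lam • (1 - p) - a * (1 - p)) * b = 1 - p} = spectrum ℂ a \ σ) :
    ∀ ξ μ : ℂ, 2 * sSup ((fun z : ℂ => ‖z‖) '' σ) < ‖ξ‖ → μ ∈ σ →
      IsUnit (a - μ • (1 : A) - ξ • p) := by
  intro ξ μ hξ hμ
  -- boundedness of σ
  obtain ⟨R, hR⟩ := ((spectrum.isBounded a).subset hσ).exists_norm_le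
  have hbdd : BddAbove ((fun z : ℂ => ‖z‖) '' σ) := by
    refine ⟨R, ?_⟩
    rintro x ⟨z, hz, rfl⟩
    exact hR z hz
  set r := sSup ((fun z : ℂ => ‖z‖) '' σ) with hr
  have hμr : ‖μ‖ ≤ r := le_csSup hbdd ⟨μ, hμ, rfl⟩
  have hr0 : (0 : ℝ) ≤ r := by
    simpa using le_csSup hbdd ⟨0, h0, by simp⟩
  -- μ + ξ ∉ σ
  have hnot : μ + ξ ∉ σ := by
    intro h
    have h1 : ‖μ + ξ‖ ≤ r := le_csSup hbdd ⟨μ + ξ, h, rfl⟩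
    have h2 : ‖ξ‖ ≤ ‖μ + ξ‖ + ‖μ‖ := by
      calc ‖ξ‖ = ‖(μ + ξ) + (-μ)‖ := by ring_nf
      _ ≤ ‖μ + ξ‖ + ‖-μ‖ := norm_add_le _ _
      _ = ‖μ + ξ‖ + ‖μ‖ := by rw [norm_neg]
    linarith
  -- corner inverses
  rw [← hspec1] at hnot
  simp only [Set.mem_setOf_eq, not_not] at hnot
  obtain ⟨b₁, hb₁p, hb₁l, hb₁r⟩ := hnot
  have hμ2 : μ ∉ spectrum ℂ a \ σ := fun h => h.2 hμ
  rw [← hspec2] at hμ2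
  simp only [Set.mem_setOf_eq, not_not] at hμ2
  obtain ⟨b₂, hb₂p, hb₂l, hb₂r⟩ := hμ2
  set X₁ : A := (μ + ξ) • p - a * p with hX₁
  set X₂ : A := μ • (1 - p) - a * (1 - p) with hX₂
  have h1 : p * (1 - p) = 0 := by simp [mul_sub, hp]
  have h2 : (1 - p) * p = 0 := by simp [sub_mul, hp]
  have hX1q : X₁ * (1 - p) = 0 := by
    simp [hX₁, sub_mul, smul_mul_assoc, mul_assoc, h1]
  have hqX1 : (1 - p) * X₁ = 0 := by
    have h3 : (1 - p) * (a * p) = 0 := by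
      rw [← mul_assoc, sub_mul, one_mul, ← hcomm, sub_mul, mul_assoc, hp, sub_self]
    rw [hX₁, mul_sub, mul_smul_comm, h2, h3]; simp
  have hX2p : X₂ * p = 0 := by
    simp [hX₂, sub_mul, smul_mul_assoc, mul_assoc, h2]
  have hpX2 : p * X₂ = 0 := by
    have h3 : p * (a * (1 - p)) = 0 := by
      rw [← mul_assoc, ← hcomm, mul_assoc, h1, mul_zero]
    rw [hX₂, mul_sub, mul_smul_comm, h1, h3]; simp
  -- cross products vanish
  have c1 : b₁ * X₂ = 0 := by rw [← hb₁p, mul_assoc, hpX2, mul_zero]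
  have c2 : b₂ * X₁ = 0 := by rw [← hb₂p, mul_assoc, hqX1, mul_zero]
  have c3 : X₂ * b₁ = 0 := by rw [← hb₁p, ← mul_assoc, ← mul_assoc, hX2p, zero_mul, zero_mul]
  have c4 : X₁ * b₂ = 0 := by rw [← hb₂p, ← mul_assoc, ← mul_assoc, hX1q, zero_mul, zero_mul]
  have mul1 : (b₁ + b₂) * (X₁ + X₂) = 1 := by
    rw [add_mul, mul_add, mul_add, hb₁l, c1, c2, hb₂l]
    abel
  have mul2 : (X₁ + X₂) * (b₁ + b₂) = 1 := by
    rw [add_mul, mul_add, mul_add, hb₁r, c3, c4, hb₂r]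
    abel
  have hu : IsUnit (X₁ + X₂) := ⟨⟨X₁ + X₂, b₁ + b₂, mul2, mul1⟩, rfl⟩
  have key : a - μ • (1 : A) - ξ • p = -(X₁ + X₂) := by
    simp only [hX₁, hX₂, mul_sub, mul_one, smul_sub, smul_one, add_smul]
    abel
  rw [key]
  exact hu.neg
end

section
/- Let A be a complex unital Banach algebra, let a ∈ A be non-invertible with a spectral set σ containing 0, let p = p_σ be the corresponding spectral idempotent and let ξ ∈ ℂ with |ξ| > 2·sup{|λ| : λ ∈ σ}. Define a^{D,σ} = (a − ξp)⁻¹(1 − p). Then a·a^{D,σ} = a^{D,σ}·a, a^{D,σ}·a·a^{D,σ} = a^{D,σ}, and 1 − a·a^{D,σ} = p. -/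
/-- Let `a` be non-invertible with a spectral set `σ` containing `0`, with spectral
idempotent `p` (an idempotent commuting with `a`), and let `ξ` satisfy
`‖ξ‖ > 2·sup {‖λ‖ : λ ∈ σ}`, so that `a - ξp` is invertible. Then
`a^{D,σ} = (a - ξp)⁻¹(1 - p)` satisfies `a·a^{D,σ} = a^{D,σ}·a`,
`a^{D,σ}·a·a^{D,σ} = a^{D,σ}`, and `1 - a·a^{D,σ} = p`. -/
theorem stmt8 {A : Type*} [NormedRing A] [NormedAlgebra ℂ A] [CompleteSpace A]
    (a p : A) (σ : Set ℂ) (ξ : ℂ) (hna : ¬ IsUnit a) (hσ : σ ⊆ spectrum ℂ a)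
    (h0 : (0 : ℂ) ∈ σ) (hp : p * p = p) (hcomm : a * p = p * a)
    (hξ : 2 * sSup ((fun z : ℂ => ‖z‖) '' σ) < ‖ξ‖)
    (hu : IsUnit (a - ξ • p)) :
    let aD : A := Ring.inverse (a - ξ • p) * (1 - p)
    a * aD = aD * a ∧ aD * a * aD = aD ∧ 1 - a * aD = p := by
  intro aD
  set u := a - ξ • p with hudef
  set v := Ring.inverse u with hvdef
  have hinv : v * u = 1 := Ring.inverse_mul_cancel u hu
  have hinv' : u * v = 1 := Ring.mul_inverse_cancel u hu
  have hua : u * a = a * u := by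
    simp only [hudef, sub_mul, mul_sub, smul_mul_assoc, mul_smul_comm, hcomm]
  have hup : u * p = p * u := by
    simp only [hudef, sub_mul, mul_sub, smul_mul_assoc, mul_smul_comm, hcomm]
  have conj : ∀ x : A, u * x = x * u → v * x = x * v := by
    intro x hx
    calc v * x = v * x * (u * v) := by rw [hinv', mul_one]
    _ = v * (x * u) * v := by rw [mul_assoc, mul_assoc, mul_assoc]
    _ = v * (u * x) * v := by rw [hx]
    _ = (v * u) * (x * v) := by rw [mul_assoc, mul_assoc, mul_assoc]
    _ = x * v := by rw [hinv, one_mul]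
  have hva : v * a = a * v := conj a hua
  have hvp : v * p = p * v := conj p hup
  have hvq : v * (1 - p) = (1 - p) * v := by
    simp only [sub_mul, mul_sub, one_mul, mul_one, hvp]
  have key : a * (1 - p) = u * (1 - p) := by
    simp only [hudef, sub_mul, mul_sub, mul_one, smul_mul_assoc, hp]
    abel
  have hq : (1 - p) * a = a * (1 - p) := by
    simp only [sub_mul, mul_sub, one_mul, mul_one, hcomm]
  have hqq : (1 - p) * (1 - p) = 1 - p := by
    simp only [sub_mul, mul_sub, one_mul, mul_one, hp]
    abel
  have haaD : a * aD = 1 - p := by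
    show a * (v * (1 - p)) = 1 - p
    rw [← mul_assoc, ← hva, mul_assoc, key, ← mul_assoc, hinv, one_mul]
  have haDa : aD * a = 1 - p := by
    show v * (1 - p) * a = 1 - p
    rw [mul_assoc, hq, key, ← mul_assoc, hinv, one_mul]
  refine ⟨?_, ?_, ?_⟩
  · rw [haaD, haDa]
  · show aD * a * aD = aD
    rw [haDa]
    show (1 - p) * (v * (1 - p)) = aD
    rw [← mul_assoc, ← hvq, mul_assoc, hqq]
  · rw [haaD]; abel
end

section
/- In the Banach algebra A = C([0,1], ℂ) of continuous complex-valued functions with the sup norm, the elements a_n defined by a_n(t) = t/n satisfy σ(a_n) = [0, 1/n] (as a subset of ℂ), and in particular 0 is an accumulation point of σ(a_n) for every n ≥ 1, while a_n → 0 in norm. Consequently, the set of elements a with 0 not an accumulation point of σ(a) is not open in A. -/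
/-!
The spectrum of `aₙ` is its range `[0, 1/n]`, which accumulates at `0`. So the `aₙ` lie in the
complement of the set in question; as `aₙ → 0`, that complement is not closed, because `σ(0) = {0}`
has no accumulation points.
-/

open Filter Topology

/-- The elements `aₙ(t) = t/n` of `C([0,1], ℂ)`. -/
noncomputable def aseq (n : ℕ) : C(Set.Icc (0 : ℝ) 1, ℂ) :=
  ⟨fun t => ((t : ℝ) : ℂ) / (n : ℂ), by fun_prop⟩

open Set

lemma aseq_eq_smul (n : ℕ) : aseq n = (n : ℂ)⁻¹ • aseq 1 := by
  ext t
  simp [aseq, div_eq_inv_mul]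

lemma tendsto_aseq_zero : Tendsto aseq atTop (𝓝 0) := by
  rw [funext aseq_eq_smul, ← zero_smul ℂ (aseq 1)]
  exact tendsto_inv_atTop_nhds_zero_nat.smul_const (aseq 1)

lemma spectrum_aseq (n : ℕ) (hn : n ≠ 0) :
    spectrum ℂ (aseq n) = ((↑) : ℝ → ℂ) '' Icc 0 (1 / n) := by
  have hIcc : Icc (0 : ℝ) (1 / n) = (· * (n : ℝ)⁻¹) '' Icc 0 1 := by
    rw [image_mul_right_Icc' _ _ (by positivity), zero_mul, one_mul, one_div]
  rw [ContinuousMap.spectrum_eq_range, hIcc, image_image]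
  ext z
  simp [aseq, div_eq_mul_inv]

lemma accPt_ofReal_image_Icc {c : ℝ} (hc : 0 < c) :
    AccPt (0 : ℂ) (𝓟 (((↑) : ℝ → ℂ) '' Icc 0 c)) := by
  have h : AccPt (0 : ℝ) (𝓟 (Icc 0 c)) := by
    rw [accPt_principal_iff_nhdsWithin, Icc_sdiff_left]
    exact left_nhdsWithin_Ioc_neBot hc
  simpa using h.map Complex.continuous_ofReal.continuousAt Complex.ofReal_injective

lemma not_accPt_principal_singleton {X : Type*} [TopologicalSpace X] (x : X) :
    ¬ AccPt x (𝓟 {x}) := by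
  rw [accPt_principal_iff_nhdsWithin, sdiff_self, nhdsWithin_empty]
  exact not_neBot.mpr rfl

/-- In `A = C([0,1], ℂ)`: each `aₙ` has spectrum `[0, 1/n]`, so `0` is an accumulation
point of `σ(aₙ)` for every `n ≥ 1`, while `aₙ → 0` in norm; consequently the set of
elements `a` with `0` not an accumulation point of `σ(a)` is not open. -/
theorem stmt16 :
    (∀ n : ℕ, 1 ≤ n →
      spectrum ℂ (aseq n) =
        {z : ℂ | ∃ t : ℝ, t ∈ Set.Icc (0 : ℝ) (1 / (n : ℝ)) ∧ z = (t : ℂ)} ∧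
      AccPt (0 : ℂ) (𝓟 (spectrum ℂ (aseq n)))) ∧
    Tendsto aseq atTop (𝓝 0) ∧
    ¬ IsOpen {f : C(Set.Icc (0 : ℝ) 1, ℂ) | ¬ AccPt (0 : ℂ) (𝓟 (spectrum ℂ f))} := by
  have hacc (n : ℕ) (hn : 1 ≤ n) : AccPt (0 : ℂ) (𝓟 (spectrum ℂ (aseq n))) := by
    rw [spectrum_aseq n (by omega)]
    exact accPt_ofReal_image_Icc (by positivity)
  refine ⟨fun n hn => ⟨?_, hacc n hn⟩, tendsto_aseq_zero, fun hopen => ?_⟩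
  · rw [spectrum_aseq n (by omega)]
    ext z
    simp [eq_comm]
  · have hzero : (0 : C(Icc (0 : ℝ) 1, ℂ)) ∈ {f | ¬ AccPt (0 : ℂ) (𝓟 (spectrum ℂ f))}ᶜ :=
      hopen.isClosed_compl.mem_of_tendsto tendsto_aseq_zero
        ((eventually_ge_atTop 1).mono fun n hn => not_not_intro (hacc n hn))
    rw [mem_compl_iff, mem_ofPred_eq, not_not, spectrum.zero_eq] at hzero
    exact not_accPt_principal_singleton 0 hzero
end

section
/- Let A be a complex unital Banach algebra and a ∈ A non-invertible with a spectral set σ containing 0 and spectral idempotent p. With a^{D,σ} = (a − ξp)⁻¹(1−p) for some |ξ| > 2·sup{|λ| : λ ∈ σ}, the element c = a²·a^{D,σ} is the Drazin inverse of b = a^{D,σ}: bc = cb, cbc = c, b − b²c = 0; moreover b·c = a·a^{D,σ} = 1 − p. -/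
/-- Let `a` be non-invertible with a spectral set `σ` containing `0`, spectral idempotent
`p` (an idempotent commuting with `a`), and `ξ` with `‖ξ‖ > 2·sup {‖λ‖ : λ ∈ σ}`, so that
`a - ξp` is invertible. Then `c = a²·a^{D,σ}` is the Drazin inverse of `b = a^{D,σ}`:
`bc = cb`, `cbc = c`, `b - b²c = 0`; moreover `b·c = a·a^{D,σ} = 1 - p`. -/
theorem stmt17 {A : Type*} [NormedRing A] [NormedAlgebra ℂ A] [CompleteSpace A]
    (a p : A) (σ : Set ℂ) (ξ : ℂ) (hna : ¬ IsUnit a) (hσ : σ ⊆ spectrum ℂ a)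
    (h0 : (0 : ℂ) ∈ σ) (hp : p * p = p) (hcomm : a * p = p * a)
    (hξ : 2 * sSup ((fun z : ℂ => ‖z‖) '' σ) < ‖ξ‖)
    (hu : IsUnit (a - ξ • p)) :
    let b : A := Ring.inverse (a - ξ • p) * (1 - p)
    let c : A := a ^ 2 * b
    b * c = c * b ∧ c * b * c = c ∧ b - b ^ 2 * c = 0 ∧
    b * c = a * b ∧ a * b = 1 - p := by
  intro b c
  set u : A := a - ξ • p with hu_def
  set i : A := Ring.inverse u with hi_def
  have hb : b = i * (1 - p) := rfl
  have hc : c = a ^ 2 * b := rfl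
  have hpu : Commute p u := by
    show p * u = u * p
    simp only [hu_def, mul_sub, sub_mul, mul_smul_comm, smul_mul_assoc, hp, ← hcomm]
  have hau : Commute a u := by
    show a * u = u * a
    simp only [hu_def, mul_sub, sub_mul, mul_smul_comm, smul_mul_assoc, hcomm]
  have hpi : Commute p i := by
    have h1 : Commute p (hu.unit : A) := by rwa [hu.unit_spec]
    have h2 := h1.units_inv_right
    rw [hi_def, ← hu.unit_spec, Ring.inverse_unit]
    exact h2
  have hai : Commute a i := by
    have h1 : Commute a (hu.unit : A) := by rwa [hu.unit_spec]
    have h2 := h1.units_inv_right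
    rw [hi_def, ← hu.unit_spec, Ring.inverse_unit]
    exact h2
  have hiu : i * u = 1 := Ring.inverse_mul_cancel u hu
  have key : u * (1 - p) = a * (1 - p) := by
    simp only [hu_def, mul_sub, sub_mul, mul_one, smul_mul_assoc, hp]
    abel
  have hq : (1 - p) * (1 - p) = 1 - p := by
    rw [sub_mul, one_mul, mul_sub, mul_one, hp]; abel
  have hqa : (1 - p) * a = a * (1 - p) := by
    rw [sub_mul, mul_sub, one_mul, mul_one, hcomm]
  have hqi : (1 - p) * i = i * (1 - p) := by
    rw [sub_mul, mul_sub, one_mul, mul_one, hpi.eq]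
  -- a * b = 1 - p
  have hab : a * b = 1 - p := by
    rw [hb, ← mul_assoc, hai.eq, mul_assoc, ← key, ← mul_assoc, hiu, one_mul]
  -- (1 - p) * b = b
  have hpb : (1 - p) * b = b := by
    rw [hb, ← mul_assoc, hqi, mul_assoc, hq]
  -- b * (1 - p) = b
  have hbq : b * (1 - p) = b := by
    rw [hb, mul_assoc, hq]
  -- b commutes with a
  have hba : b * a = a * b := by
    rw [hb, mul_assoc, hqa, ← mul_assoc, ← hai.eq, mul_assoc]
  -- b * c = 1 - p
  have hbc : b * c = 1 - p := by
    rw [hc, sq, mul_assoc a a b, hab, ← mul_assoc, hba, hab, hq]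
  -- c * b = 1 - p
  have hcb : c * b = 1 - p := by
    rw [hc, sq, mul_assoc (a * a) b b, mul_assoc a a (b * b), ← mul_assoc a b b, hab, hpb, hab]
  refine ⟨hbc.trans hcb.symm, ?_, ?_, hbc.trans hab.symm, hab⟩
  · rw [hcb, hc, sq, ← mul_assoc (1 - p) (a * a) b, ← mul_assoc (1 - p) a a, hqa,
      mul_assoc a (1 - p) a, hqa, ← mul_assoc a a (1 - p), mul_assoc (a * a) (1 - p) b, hpb]
  · rw [sq, mul_assoc, hbc, hbq, sub_self]
end

section
/- Let A be a complex unital Banach algebra, and let a ∈ A with spectral set σ containing 0, spectral idempotent p, and relative Drazin inverse a^{D,σ} = (a + p)⁻¹(1 − p) (taking ξ = −1, assuming sup{|λ| : λ ∈ σ} < 1/2). Then for every λ in the resolvent set of a with λ also in the resolvent set of ap, one has (λ − a)⁻¹(1 − p) = −Σ_{k=0}^{∞} λᵏ (a^{D,σ})^{k+1} whenever |λ| < 1/‖a^{D,σ}‖; consequently a^{D,σ} = lim_{λ→0, λ∈ρ(a)∩ρ(ap)} (a − λ)⁻¹(1 − p). -/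
open Filter Topology

lemma myRing.inverse_neg' {A : Type*} [Ring A] (u : A) (h : IsUnit u) :
    Ring.inverse (-u) = - Ring.inverse u := by
  obtain ⟨v, rfl⟩ := h
  rw [← Units.val_neg, Ring.inverse_unit, Ring.inverse_unit]
  simp

section core
variable {A : Type*} [NormedRing A] [NormedAlgebra ℂ A] [CompleteSpace A]

lemma core_lemma (a p : A) (hp : p * p = p) (hcomm : a * p = p * a) (hu : IsUnit (a + p))
    (lam : ℂ) (hsmall : ‖lam • (Ring.inverse (a + p) * (1 - p))‖ < 1)
    (hunit : IsUnit (lam • (1 : A) - a)) :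
    Ring.inverse (lam • (1 : A) - a) * (1 - p) =
      - (Ring.inverse (1 - lam • (Ring.inverse (a + p) * (1 - p))) *
          (Ring.inverse (a + p) * (1 - p))) := by
  set b := Ring.inverse (a + p) with hbdef
  set aD := b * (1 - p) with haD
  obtain ⟨v, hv⟩ := hu
  have hb : b = ↑v⁻¹ := by rw [hbdef, ← hv, Ring.inverse_unit]
  have hpa : Commute p a := hcomm.symm
  have hpv : Commute p (↑v : A) := by rw [hv]; exact hpa.add_right (Commute.refl p)
  have hav : Commute a (↑v : A) := by rw [hv]; exact (Commute.refl a).add_right hcomm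
  have hpb : Commute p b := hb ▸ hpv.units_inv_right
  have hab : Commute a b := hb ▸ hav.units_inv_right
  have hbu : b * (a + p) = 1 := by rw [hb, ← hv]; exact v.inv_mul
  have hcaD : Commute a aD := hab.mul_right ((Commute.one_right a).sub_right hpa.symm)
  have hcpD : Commute p aD := hpb.mul_right ((Commute.one_right p).sub_right (Commute.refl p))
  have haaD : a * aD = 1 - p := by
    have h1 : a * (1 - p) = (a + p) * (1 - p) := by
      have h0 : p * (1 - p) = 0 := by rw [mul_sub, mul_one, hp, sub_self]
      rw [add_mul, h0, add_zero]
    rw [haD, ← mul_assoc, hab.eq, mul_assoc, h1, ← mul_assoc, hbu, one_mul]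
  have haDp : aD * p = 0 := by
    rw [haD, mul_assoc, sub_mul, one_mul, hp, sub_self, mul_zero]
  -- the geometric-series inverse
  set X := Ring.inverse (1 - lam • aD) with hX
  obtain ⟨w, hw⟩ : IsUnit (1 - lam • aD) := isUnit_one_sub_of_norm_lt_one hsmall
  have hXw : X = ↑w⁻¹ := by rw [hX, ← hw, Ring.inverse_unit]
  have hX1 : X * (1 - lam • aD) = 1 := by rw [hXw, ← hw]; exact w.inv_mul
  have hXp : X * p = p := by
    have h1 : (1 - lam • aD) * p = p := by
      rw [sub_mul, one_mul, smul_mul_assoc, haDp, smul_zero, sub_zero]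
    calc X * p = X * ((1 - lam • aD) * p) := by rw [h1]
      _ = p := by rw [← mul_assoc, hX1, one_mul]
  have hcw : Commute (lam • (1 : A) - a) (↑w : A) := by
    rw [hw]
    have c1 : Commute (lam • (1 : A)) (1 - lam • aD) := (Commute.one_left _).smul_left lam
    have c2 : Commute a (1 - lam • aD) := (Commute.one_right a).sub_right (hcaD.smul_right lam)
    exact c1.sub_left c2
  have hcX : Commute (lam • (1 : A) - a) X := hXw ▸ hcw.units_inv_right
  have key : (lam • (1 : A) - a) * (-(X * aD)) = 1 - p := by
    have h1 : (lam • (1 : A) - a) * aD = lam • aD - (1 - p) := by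
      rw [sub_mul, smul_mul_assoc, one_mul, haaD]
    have h2 : (lam • (1 : A) - a) * (X * aD) = X * ((lam • (1 : A) - a) * aD) := by
      rw [← mul_assoc, hcX.eq, mul_assoc]
    rw [mul_neg, h2, h1]
    have e : lam • aD - (1 - p) = -((1 - lam • aD) - p) := by abel
    rw [e, mul_neg, mul_sub, hX1, hXp, neg_neg]
  calc Ring.inverse (lam • (1 : A) - a) * (1 - p)
      = Ring.inverse (lam • (1 : A) - a) * ((lam • (1 : A) - a) * (-(X * aD))) := by rw [key]
    _ = (Ring.inverse (lam • (1 : A) - a) * (lam • (1 : A) - a)) * (-(X * aD)) := by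
        rw [mul_assoc]
    _ = -(X * aD) := by rw [Ring.inverse_mul_cancel _ hunit, one_mul]

lemma tsum_eq_core (aD : A) (lam : ℂ) (hsmall : ‖lam • aD‖ < 1) :
    ∑' k : ℕ, lam ^ k • aD ^ (k + 1) = Ring.inverse (1 - lam • aD) * aD := by
  have hs := summable_geometric_of_norm_lt_one hsmall
  rw [← geom_series_eq_inverse _ hsmall, ← hs.tsum_mul_right aD]
  exact tsum_congr fun k => by rw [smul_pow, smul_mul_assoc, ← pow_succ]

end core

/-- With `p` the spectral idempotent (an idempotent commuting with `a`, `a + p`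
invertible) and `a^{D,σ} = (a + p)⁻¹(1 - p)`: for every `λ` in the resolvent set of `a`
and of `ap` with `‖λ‖ < 1/‖a^{D,σ}‖`, one has
`(λ - a)⁻¹(1 - p) = -∑_{k} λᵏ (a^{D,σ})^{k+1}`; consequently
`a^{D,σ} = lim_{λ → 0, λ ∈ ρ(a) ∩ ρ(ap)} (a - λ)⁻¹(1 - p)`. -/
theorem stmt18 {A : Type*} [NormedRing A] [NormedAlgebra ℂ A] [CompleteSpace A]
    (a p : A) (hp : p * p = p) (hcomm : a * p = p * a) (hu : IsUnit (a + p)) :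
    let aD : A := Ring.inverse (a + p) * (1 - p)
    (∀ lam : ℂ, lam ∉ spectrum ℂ a → lam ∉ spectrum ℂ (a * p) →
      ‖lam‖ < 1 / ‖aD‖ →
      Ring.inverse (lam • (1 : A) - a) * (1 - p) =
        - ∑' k : ℕ, lam ^ k • aD ^ (k + 1)) ∧
    Tendsto (fun lam : ℂ => Ring.inverse (a - lam • (1 : A)) * (1 - p))
      (𝓝[{lam : ℂ | lam ∉ spectrum ℂ a ∧ lam ∉ spectrum ℂ (a * p)}] 0)
      (𝓝 aD) := by
  intro aD
  have hDdef : aD = Ring.inverse (a + p) * (1 - p) := rfl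
  have hunit_of : ∀ lam : ℂ, lam ∉ spectrum ℂ a → IsUnit (lam • (1 : A) - a) := by
    intro lam hlam
    have := spectrum.notMem_iff.mp hlam
    rwa [Algebra.algebraMap_eq_smul_one] at this
  constructor
  · intro lam hla _hlap hnorm
    have hsmall : ‖lam • aD‖ < 1 := by
      rw [norm_smul]
      rcases eq_or_lt_of_le (norm_nonneg aD) with h | h
      · rw [← h, mul_zero]; exact one_pos
      · exact (lt_div_iff₀ h).mp hnorm
    rw [tsum_eq_core aD lam hsmall]
    exact core_lemma a p hp hcomm hu lam hsmall (hunit_of lam hla)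
  · -- the limit
    have hcont : Tendsto (fun lam : ℂ => Ring.inverse (1 - lam • aD) * aD) (𝓝 0) (𝓝 aD) := by
      have h1 : Tendsto (fun lam : ℂ => 1 - lam • aD) (𝓝 0) (𝓝 1) := by
        have hc : Continuous fun lam : ℂ => (1 : A) - lam • aD := by fun_prop
        have := hc.tendsto 0
        simpa using this
      have h2 := (NormedRing.inverse_continuousAt (1 : Aˣ)).tendsto
      have h3 := h2.comp h1
      simp only [Units.val_one, Ring.inverse_one] at h3
      have h4 := h3.mul_const aD
      simpa using h4
    have h0 : Tendsto (fun lam : ℂ => Ring.inverse (1 - lam • aD) * aD)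
        (𝓝[{lam : ℂ | lam ∉ spectrum ℂ a ∧ lam ∉ spectrum ℂ (a * p)}] 0) (𝓝 aD) :=
      hcont.mono_left nhdsWithin_le_nhds
    refine h0.congr' ?_
    have hsm : ∀ᶠ lam : ℂ in 𝓝 0, ‖lam • aD‖ < 1 := by
      have hc : Tendsto (fun lam : ℂ => ‖lam • aD‖) (𝓝 0) (𝓝 ‖(0 : ℂ) • aD‖) :=
        (continuous_norm.comp (continuous_id.smul continuous_const)).tendsto 0
      simp only [zero_smul, norm_zero] at hc
      exact hc.eventually_lt_const one_pos
    filter_upwards [eventually_mem_nhdsWithin,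
      eventually_nhdsWithin_of_eventually_nhds hsm] with lam hmem hsmall
    have hla : lam ∉ spectrum ℂ a := hmem.1
    have hun := hunit_of lam hla
    have hneg : a - lam • (1 : A) = -(lam • (1 : A) - a) := by abel
    rw [hneg, myRing.inverse_neg' _ hun, neg_mul,
      core_lemma a p hp hcomm hu lam hsmall hun, neg_neg]
end
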